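/- arXiv:math/0703102 — 2 statements merged into one kernel-verified Lean document; each statement's English description precedes it below -/
import Mathlib

section
/- The major index code Majcode is a bijection from S_n onto the set SE_n of subexcedent words of length n, and the sum of the letters of Majcode σ equals maj σ. -/
/-- Descent set (ligne of route) of a word, with 1-based positions. -/
def ligne (w : List ℕ) : Finset ℕ :=
  (Finset.Icc 1 (w.length - 1)).filter (fun i => w.getD (i-1) 0 > w.getD i 0)

/-- Major index of a word. -/
def maj (w : List ℕ) : ℕ := ∑ i ∈ ligne w, i

/-- Inversion number of a word. -/
def inv (w : List ℕ) : ℕ :=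
  ((Finset.range w.length ×ˢ Finset.range w.length).filter
    (fun p => p.1 < p.2 ∧ w.getD p.1 0 > w.getD p.2 0)).card

/-- `w` is (the one-line word of) a permutation of `1,…,n`. -/
def IsPermWord (n : ℕ) (w : List ℕ) : Prop := w.Perm (List.range' 1 n)

/-- One-line word of `σ ∈ S_n` with values in `1,…,n`. -/
def toWord {n : ℕ} (σ : Equiv.Perm (Fin n)) : List ℕ := List.ofFn (fun i => (σ i : ℕ) + 1)

/-- Subexcedent word: `0 ≤ d_i ≤ i-1` (1-based), i.e. `d_i ≤ i` for 0-based `i`. -/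
def Subexcedent (w : List ℕ) : Prop := ∀ i < w.length, w.getD i 0 ≤ i

/-- Subdiagonal word: `0 ≤ d_i ≤ n-i` (1-based). -/
def Subdiagonal (w : List ℕ) : Prop := ∀ i < w.length, w.getD i 0 + i + 1 ≤ w.length

/-- Lehmer code: `d_i = #{j < i : x_j > x_i}`. -/
def invcode (w : List ℕ) : List ℕ :=
  (List.range w.length).map (fun i => ((Finset.range i).filter (fun j => w.getD j 0 > w.getD i 0)).card)

/-- `Lc`-code: `d_i = #{j > i : x_i > x_j}`. -/
def lc (w : List ℕ) : List ℕ :=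
  (List.range w.length).map (fun i => ((Finset.Ico (i+1) w.length).filter (fun j => w.getD i 0 > w.getD j 0)).card)

/-- Major index code: `d_i = maj(σ|_i) - maj(σ|_{i-1})`, where `σ|_i` erases letters `> i`. -/
def majcode (w : List ℕ) : List ℕ :=
  (List.range w.length).map (fun i => maj (w.filter (· ≤ i+1)) - maj (w.filter (· ≤ i)))

/-- `Mc`-code: `d_i = maj(σ^{(i)}) - maj(σ^{(i+1)})`, where `σ^{(i)}` erases letters `< i`. -/
def mc (w : List ℕ) : List ℕ :=
  (List.range w.length).map (fun i => maj (w.filter (fun x => i+1 ≤ x)) - maj (w.filter (fun x => i+2 ≤ x)))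

/-- One-line word of the inverse permutation. -/
def invWord (w : List ℕ) : List ℕ :=
  (List.range w.length).map (fun i => w.idxOf (i+1) + 1)

/-- `Ic σ = Lc (σ⁻¹)`. -/
def ic (w : List ℕ) : List ℕ := lc (invWord w)

/-- Inverse ligne of route. -/
def iligne (w : List ℕ) : Finset ℕ := ligne (invWord w)

/-- Complement map `δ` on codes: `δ(d₁⋯d_n) = (0-d₁)(1-d₂)⋯(n-1-d_n)`. -/
def deltaC (w : List ℕ) : List ℕ :=
  (List.range w.length).map (fun i => i - w.getD i 0)

/-- Nondecreasing rearrangement of a word. -/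
def sortW (w : List ℕ) : List ℕ := List.insertionSort (· ≤ ·) w

/-- Set-valued statistic `El = Ligne ∘ Mc⁻¹` on subdiagonal words. -/
noncomputable def El (d : List ℕ) : Finset ℕ := by
  classical
  exact if h : ∃ w, IsPermWord d.length w ∧ mc w = d then ligne h.choose else ∅

/-- Set-valued statistic `Eul = Ligne ∘ Majcode⁻¹` on subexcedent words. -/
noncomputable def Eul (d : List ℕ) : Finset ℕ := by
  classical
  exact if h : ∃ w, IsPermWord d.length w ∧ majcode w = d then ligne h.choose else ∅

/-!
Inserting a letter larger than all letters of a word `u` into one of its `|u| + 1` slots raises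
`maj` by an amount depending only on `u` and the slot, and these amounts are exactly
`0, 1, …, |u|`: the last slot gives `0`, the slots inside a descent give `1, …, des u` from right
to left, and the remaining slots give the larger values from left to right. Since `σ|_i` is
obtained from `σ|_{i-1}` by inserting the letter `i`, the `i`-th letter of `Majcode σ` is the amount
for that insertion, so induction on `n` shows that `Majcode` is a bijection onto subexcedent words,
and its letters telescope to `maj σ`.
-/

def des (w : List ℕ) : ℕ := (ligne w).card

theorem ligne_cons (x : ℕ) (w : List ℕ) :
    ligne (x :: w) = if w ≠ [] ∧ w.getD 0 0 < x
      then insert 1 ((ligne w).map (addRightEmbedding 1)) else (ligne w).map (addRightEmbedding 1) := by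
  ext i
  rcases i with _ | _ | i
  · split_ifs <;> simp [ligne]
  · cases w <;> split_ifs <;> simp_all [ligne]
  · split_ifs <;> simp [ligne] <;> omega

theorem one_notMem_map_ligne (w : List ℕ) : 1 ∉ (ligne w).map (addRightEmbedding 1) := by
  simp [ligne]

theorem des_cons (x : ℕ) (w : List ℕ) :
    des (x :: w) = des w + if w ≠ [] ∧ w.getD 0 0 < x then 1 else 0 := by
  rw [des, des, ligne_cons]
  split_ifs
  · rw [Finset.card_insert_of_notMem (one_notMem_map_ligne w), Finset.card_map]
  · rw [Finset.card_map, add_zero]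

theorem maj_cons (x : ℕ) (w : List ℕ) : maj (x :: w) = maj w + des (x :: w) := by
  have hshift : ∑ i ∈ (ligne w).map (addRightEmbedding 1), i = maj w + des w := by
    simp only [Finset.sum_map, addRightEmbedding_apply, Finset.sum_add_distrib, Finset.sum_const,
      smul_eq_mul, mul_one, maj, des]
  rw [des_cons, maj, ligne_cons]
  split_ifs
  · rw [Finset.sum_insert (one_notMem_map_ligne w), hshift]
    ring
  · rw [hshift, add_zero]

theorem des_cons_cons (x y : ℕ) (w : List ℕ) :
    des (x :: y :: w) = des (y :: w) + if y < x then 1 else 0 := by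
  simp [des_cons (x := x)]

theorem des_le_length_sub_one (w : List ℕ) : des w ≤ w.length - 1 :=
  (Finset.card_filter_le _ _).trans (by simp)

theorem des_drop_eq {u : List ℕ} {p : ℕ} (hp : p < u.length) :
    des (u.drop p) = des (u.drop (p + 1)) +
      if p + 1 < u.length ∧ u.getD (p + 1) 0 < u.getD p 0 then 1 else 0 := by
  rw [List.drop_eq_getElem_cons hp, des_cons]
  simp [List.getD_eq_getElem?_getD, hp]

theorem des_drop_succ_le_and_le_succ (u : List ℕ) (n : ℕ) :
    des (u.drop (n + 1)) ≤ des (u.drop n) ∧ des (u.drop n) ≤ des (u.drop (n + 1)) + 1 := by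
  rcases lt_or_ge n u.length with hn | hn
  · rw [des_drop_eq hn]
    split_ifs <;> omega
  · simp [List.drop_eq_nil_of_le hn, List.drop_eq_nil_of_le (hn.trans n.le_succ)]

theorem des_drop_antitone (u : List ℕ) : Antitone fun p => des (u.drop p) :=
  antitone_nat_of_succ_le fun n => (des_drop_succ_le_and_le_succ u n).1

theorem des_drop_le_des_drop_add (u : List ℕ) {p q : ℕ} (hpq : p ≤ q) :
    des (u.drop p) ≤ des (u.drop q) + (q - p) := by
  induction q, hpq using Nat.le_induction with
  | base => simp
  | succ q hpq ih =>
    have := (des_drop_succ_le_and_le_succ u q).2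
    omega

theorem des_insertIdx {m : ℕ} (u : List ℕ) (hu : ∀ x ∈ u, x < m) (p : ℕ) :
    des (u.insertIdx p m) + (if 0 < p ∧ p < u.length ∧ u.getD p 0 < u.getD (p - 1) 0 then 1 else 0)
      = des u + if p < u.length then 1 else 0 := by
  induction u generalizing p with
  | nil => cases p <;> simp [des, ligne, List.insertIdx_succ_nil]
  | cons x u ih =>
    have hx : x < m := hu x (.head u)
    rcases p with _ | _ | p
    · simp [des_cons, hx]
    · rcases u with _ | ⟨y, u⟩
      · simp [des, ligne, hx.le]
      · simp [des_cons_cons, hu y (by simp), hx.not_gt, add_right_comm]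
    · rcases u with _ | ⟨y, u⟩
      · simp [List.insertIdx_succ_cons, List.insertIdx_succ_nil]
      · have ih := ih (fun y hy => hu y (.tail x hy)) (p + 1)
        simp only [List.insertIdx_succ_cons, des_cons_cons, List.getD_cons_succ, List.length_cons,
          Nat.add_lt_add_iff_right, Nat.add_sub_cancel, Nat.zero_lt_succ, true_and] at ih ⊢
        omega

/-- The increase of `maj` when a letter larger than all letters of `u` is inserted before `u[p]`:
it creates a descent at position `p + 1`, shifts the descents to its right by one, and destroys the
descent `u[p-1] > u[p]` if there was one. -/
def majIncrement (u : List ℕ) (p : ℕ) : ℕ :=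
  if p < u.length then
    (if 0 < p ∧ u.getD p 0 < u.getD (p - 1) 0 then 1 else p + 1) + des (u.drop p)
  else 0

theorem maj_insertIdx {m : ℕ} (u : List ℕ) (hu : ∀ x ∈ u, x < m) (p : ℕ) :
    maj (u.insertIdx p m) = maj u + majIncrement u p := by
  induction u generalizing p with
  | nil => cases p <;> simp [maj, ligne, majIncrement, List.insertIdx_succ_nil]
  | cons x u ih =>
    rcases p with _ | p
    · simp [maj_cons m, des_cons_cons, hu x (.head u), majIncrement, add_comm]
    · have hdes := des_insertIdx (x :: u) hu (p + 1)
      rw [List.insertIdx_succ_cons, maj_cons x, ih (fun y hy => hu y (.tail x hy)) p,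
        maj_cons x]
      rw [List.insertIdx_succ_cons] at hdes
      rcases p with _ | p <;>
        simp only [majIncrement, List.length_cons, Nat.add_lt_add_iff_right, List.getD_cons_succ,
          List.getD_cons_zero, List.drop_succ_cons, Nat.zero_lt_succ, true_and, Nat.add_sub_cancel,
          lt_irrefl, false_and, if_false] at hdes ⊢ <;>
        split_ifs at hdes ⊢ <;> omega

theorem majIncrement_le (u : List ℕ) (p : ℕ) : majIncrement u p ≤ u.length := by
  have := des_le_length_sub_one (u.drop p)
  simp only [majIncrement, List.length_drop] at this ⊢
  split_ifs <;> omega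

theorem majIncrement_lt_of_descent {u : List ℕ} {p q : ℕ} (hpq : p < q) (hq : q < u.length)
    (hdesc : u.getD q 0 < u.getD (q - 1) 0) : majIncrement u q < majIncrement u p := by
  have hstep := des_drop_eq (u := u) (p := q - 1) (by omega)
  have hanti : des (u.drop (q - 1)) ≤ des (u.drop p) := des_drop_antitone u (by omega)
  rw [Nat.sub_add_cancel (by omega : 1 ≤ q), if_pos ⟨hq, hdesc⟩] at hstep
  simp only [majIncrement, if_pos hq, if_pos (hpq.trans hq), if_pos (⟨by omega, hdesc⟩ : 0 < q ∧ _)]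
  split_ifs <;> omega

theorem majIncrement_lt_of_not_descent {u : List ℕ} {p q : ℕ} (hpq : p < q) (hq : q < u.length)
    (hdesc : ¬ u.getD q 0 < u.getD (q - 1) 0) : majIncrement u p < majIncrement u q := by
  have hstep := des_drop_eq (u := u) (p := q - 1) (by omega)
  have hadd := des_drop_le_des_drop_add u (show p ≤ q - 1 by omega)
  rw [Nat.sub_add_cancel (by omega : 1 ≤ q), if_neg (fun h => hdesc h.2)] at hstep
  simp only [majIncrement, if_pos hq, if_pos (hpq.trans hq), if_neg (fun h : 0 < q ∧ _ => hdesc h.2)]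
  split_ifs <;> omega

theorem majIncrement_ne_of_lt {u : List ℕ} {p q : ℕ} (hpq : p < q) (hq : q ≤ u.length) :
    majIncrement u p ≠ majIncrement u q := by
  rcases hq.lt_or_eq with hq | rfl
  · by_cases hdesc : u.getD q 0 < u.getD (q - 1) 0
    · exact (majIncrement_lt_of_descent hpq hq hdesc).ne'
    · exact (majIncrement_lt_of_not_descent hpq hq hdesc).ne
  · simp only [majIncrement, if_pos hpq, lt_irrefl, if_false]
    split_ifs <;> omega

theorem majIncrement_bijOn (u : List ℕ) :
    Set.BijOn (majIncrement u) (Finset.range (u.length + 1)) (Finset.range (u.length + 1)) := by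
  have hmaps : Set.MapsTo (majIncrement u) (Finset.range (u.length + 1)) (Finset.range (u.length + 1)) :=
    fun p _ => by simpa [Nat.lt_succ_iff] using majIncrement_le u p
  have hinj : Set.InjOn (majIncrement u) (Finset.range (u.length + 1)) := by
    intro p hp q hq heq
    simp only [Finset.coe_range, Set.mem_Iio, Nat.lt_succ_iff] at hp hq
    rcases lt_trichotomy p q with hpq | hpq | hpq
    · exact absurd heq (majIncrement_ne_of_lt hpq hq)
    · exact hpq
    · exact absurd heq.symm (majIncrement_ne_of_lt hpq hp)
  exact ⟨hmaps, hinj, Finset.surjOn_of_injOn_of_card_le _ hmaps hinj le_rfl⟩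

theorem List.filter_insertIdx_of_neg {α : Type*} {P : α → Bool} {x : α} (hx : ¬ P x) :
    ∀ (l : List α) (i : ℕ), (l.insertIdx i x).filter P = l.filter P
  | [], 0 => by simp [hx]
  | [], _ + 1 => rfl
  | _ :: _, 0 => by simp [hx]
  | y :: l, i + 1 => by
    rw [List.insertIdx_succ_cons, List.filter_cons, List.filter_cons, List.filter_insertIdx_of_neg hx l i]

theorem List.insertIdx_length_append {α : Type*} (a b : List α) (x : α) :
    (a ++ b).insertIdx a.length x = a ++ x :: b := by
  induction a with
  | nil => simp
  | cons y a ih => simp [List.insertIdx_succ_cons, ih]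

theorem range'_one_succ_perm (n : ℕ) :
    List.Perm (List.range' 1 (n + 1)) ((n + 1) :: List.range' 1 n) := by
  rw [List.range'_1_concat, Nat.add_comm 1 n]
  exact List.perm_append_singleton _ _

namespace IsPermWord

variable {n : ℕ} {w : List ℕ}

theorem length_eq (h : IsPermWord n w) : w.length = n := by
  simpa using List.Perm.length_eq h

theorem le_of_mem (h : IsPermWord n w) {x : ℕ} (hx : x ∈ w) : x ≤ n := by
  have := List.mem_range'_1.mp (List.Perm.mem_iff h |>.mp hx)
  omega

theorem filter_le_eq_self (h : IsPermWord n w) : w.filter (· ≤ n) = w :=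
  List.filter_eq_self.mpr fun x hx => by simpa using h.le_of_mem hx

theorem insertIdx (h : IsPermWord n w) {p : ℕ} (hp : p ≤ n) :
    IsPermWord (n + 1) (w.insertIdx p (n + 1)) :=
  (List.perm_insertIdx _ _ (h.length_eq ▸ hp)).trans ((h.cons _).trans (range'_one_succ_perm n).symm)

theorem exists_eq_insertIdx (h : IsPermWord (n + 1) w) :
    ∃ u p, IsPermWord n u ∧ p ≤ n ∧ u.insertIdx p (n + 1) = w := by
  obtain ⟨a, b, rfl⟩ := List.append_of_mem (a := n + 1) (List.Perm.mem_iff h |>.mpr (by simp))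
  have hu : IsPermWord n (a ++ b) :=
    (List.perm_cons (n + 1)).mp (List.perm_middle.symm.trans (h.trans (range'_one_succ_perm n)))
  refine ⟨a ++ b, a.length, hu, ?_, List.insertIdx_length_append a b (n + 1)⟩
  have := hu.length_eq
  rw [List.length_append] at this
  omega

end IsPermWord

theorem majcode_length (w : List ℕ) : (majcode w).length = w.length := by
  simp [majcode]

theorem majcode_insertIdx {n : ℕ} {u : List ℕ} (hu : IsPermWord n u) {p : ℕ} (hp : p ≤ n) :
    majcode (u.insertIdx p (n + 1)) = majcode u ++ [majIncrement u p] := by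
  have hfilter : ∀ j ≤ n, (u.insertIdx p (n + 1)).filter (· ≤ j) = u.filter (· ≤ j) :=
    fun j hj => List.filter_insertIdx_of_neg (by simpa using hj) u p
  have hlt : ∀ x ∈ u, x < n + 1 := fun x hx => Nat.lt_succ_of_le (hu.le_of_mem hx)
  rw [majcode, majcode, (hu.insertIdx hp).length_eq, hu.length_eq, List.range_succ, List.map_append,
    List.map_singleton, (hu.insertIdx hp).filter_le_eq_self, hfilter n le_rfl, hu.filter_le_eq_self,
    maj_insertIdx u hlt p, Nat.add_sub_cancel_left]
  congr 1
  refine List.map_congr_left fun i hi => ?_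
  rw [List.mem_range] at hi
  rw [hfilter (i + 1) hi, hfilter i hi.le]

theorem subexcedent_append_singleton {d : List ℕ} {e : ℕ} :
    Subexcedent (d ++ [e]) ↔ Subexcedent d ∧ e ≤ d.length := by
  have hlast : (d ++ [e]).getD d.length 0 = e := by simp
  have hinit : ∀ i < d.length, (d ++ [e]).getD i 0 = d.getD i 0 :=
    fun i hi => List.getD_append _ _ _ _ hi
  simp only [Subexcedent, List.length_append, List.length_singleton]
  refine ⟨fun h => ⟨fun i hi => hinit i hi ▸ h i (by omega), hlast ▸ h d.length (by omega)⟩, ?_⟩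
  rintro ⟨h, he⟩ i hi
  rcases (Nat.lt_succ_iff.mp hi).lt_or_eq with hi | rfl
  · exact hinit i hi ▸ h i hi
  · rwa [hlast]

theorem majcode_subexcedent {n : ℕ} {w : List ℕ} (hw : IsPermWord n w) :
    Subexcedent (majcode w) := by
  induction n generalizing w with
  | zero => simp [List.eq_nil_of_length_eq_zero hw.length_eq, majcode, Subexcedent]
  | succ n ih =>
    obtain ⟨u, p, hu, hp, rfl⟩ := hw.exists_eq_insertIdx
    rw [majcode_insertIdx hu hp, subexcedent_append_singleton, majcode_length]
    exact ⟨ih hu, majIncrement_le u p⟩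

theorem majcode_sum {n : ℕ} {w : List ℕ} (hw : IsPermWord n w) : (majcode w).sum = maj w := by
  induction n generalizing w with
  | zero => simp [List.eq_nil_of_length_eq_zero hw.length_eq, majcode, maj, ligne]
  | succ n ih =>
    obtain ⟨u, p, hu, hp, rfl⟩ := hw.exists_eq_insertIdx
    rw [majcode_insertIdx hu hp, List.sum_append, List.sum_singleton, ih hu,
      maj_insertIdx u (fun x hx => Nat.lt_succ_of_le (hu.le_of_mem hx)) p]

theorem majcode_injOn (n : ℕ) : Set.InjOn majcode {w | IsPermWord n w} := by
  induction n with
  | zero =>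
    intro w hw w' hw' _
    rw [List.eq_nil_of_length_eq_zero (IsPermWord.length_eq hw),
      List.eq_nil_of_length_eq_zero (IsPermWord.length_eq hw')]
  | succ n ih =>
    intro w hw w' hw' heq
    obtain ⟨u, p, hu, hp, rfl⟩ := IsPermWord.exists_eq_insertIdx hw
    obtain ⟨u', p', hu', hp', rfl⟩ := IsPermWord.exists_eq_insertIdx hw'
    rw [majcode_insertIdx hu hp, majcode_insertIdx hu' hp', List.append_singleton_inj] at heq
    obtain rfl : u = u' := ih hu hu' heq.1
    obtain rfl : p = p' := (majIncrement_bijOn u).injOn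
      (by simpa [hu.length_eq, Nat.lt_succ_iff] using hp)
      (by simpa [hu.length_eq, Nat.lt_succ_iff] using hp') heq.2
    rfl

theorem majcode_surjOn (n : ℕ) :
    Set.SurjOn majcode {w | IsPermWord n w} {d | d.length = n ∧ Subexcedent d} := by
  induction n with
  | zero =>
    rintro d ⟨hd, -⟩
    exact ⟨[], by simp [IsPermWord], by simp [List.eq_nil_of_length_eq_zero hd, majcode]⟩
  | succ n ih =>
    rintro d ⟨hd, hsub⟩
    obtain ⟨d, e, rfl⟩ : ∃ d' e, d = d' ++ [e] := by
      rcases List.eq_nil_or_concat d with rfl | h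
      · simp at hd
      · simpa using h
    rw [List.length_append, List.length_singleton, Nat.add_right_cancel_iff] at hd
    rw [subexcedent_append_singleton, hd] at hsub
    obtain ⟨u, hu, rfl⟩ := ih ⟨hd, hsub.1⟩
    obtain ⟨p, hp, hpe⟩ := (majIncrement_bijOn u).surjOn
      (by simpa [hu.length_eq, Nat.lt_succ_iff] using hsub.2)
    have hp : p ≤ n := by simpa [hu.length_eq, Nat.lt_succ_iff] using hp
    exact ⟨u.insertIdx p (n + 1), hu.insertIdx hp, by rw [majcode_insertIdx hu hp, hpe]⟩

theorem stmt4 (n : ℕ) :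
    Set.BijOn majcode {w | IsPermWord n w} {w | w.length = n ∧ Subexcedent w} ∧
      ∀ w : List ℕ, IsPermWord n w → (majcode w).sum = maj w :=
  ⟨⟨fun w hw => ⟨(majcode_length w).trans (IsPermWord.length_eq hw), majcode_subexcedent hw⟩,
      majcode_injOn n, majcode_surjOn n⟩,
    fun _ hw => majcode_sum hw⟩
end

section
/- Let a, b, c be words such that a, b, ca, cb are all subdiagonal (of appropriate lengths). If El(a) = El(b), then El(ca) = El(cb). -/
/-!
Erasing the letter `1` of a permutation `w ∈ S_{n+1}`, found at index `p`, and standardizing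
leaves `u ∈ S_n` with `Mc w = majGain (Ligne u) p · Mc u` and
`Ligne w = insertLigne (Ligne u) p`. Since `p ↦ majGain L p` is injective and maps `0, …, n`
onto `0, …, n` whenever `L ⊆ {1, …, n-1}`, the first letter of `Mc w` determines `p` from
`Ligne u`, so `El (k :: d)` depends only on `k` and `El d`. Induction on `c` concludes.
-/

lemma mem_ligne {w : List ℕ} {i : ℕ} :
    i ∈ ligne w ↔ (1 ≤ i ∧ i + 1 ≤ w.length) ∧ w.getD (i - 1) 0 > w.getD i 0 := by
  simp only [ligne, Finset.mem_filter, Finset.mem_Icc]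
  omega

lemma ligne_subset_Icc (w : List ℕ) : ligne w ⊆ Finset.Icc 1 (w.length - 1) :=
  Finset.filter_subset _ _

lemma zero_notMem_ligne (w : List ℕ) : 0 ∉ ligne w := by
  simp [mem_ligne]

lemma ligne_map_of_strictMono {f : ℕ → ℕ} (hf : StrictMono f) (w : List ℕ) :
    ligne (w.map f) = ligne w := by
  ext i
  simp only [mem_ligne, List.length_map, List.getD_eq_getElem?_getD, List.getElem?_map]
  constructor <;> rintro ⟨⟨hi, hlen⟩, hdesc⟩ <;>
    simp_all [List.getElem?_eq_getElem (show i - 1 < w.length by omega),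
      List.getElem?_eq_getElem (show i < w.length by omega), hf.lt_iff_lt]

lemma maj_map_of_strictMono {f : ℕ → ℕ} (hf : StrictMono f) (w : List ℕ) :
    maj (w.map f) = maj w := by
  rw [maj, maj, ligne_map_of_strictMono hf]

/- Inserting a letter smaller than all others after the first `p` letters of a word with
descent set `L` produces the descent set `insertLigne L p` and raises `maj` by `majGain L p`. -/
def insertLigne (L : Finset ℕ) (p : ℕ) : Finset ℕ :=
  L.filter (· < p) ∪ ({p} \ {0}) ∪ (L.filter (p < ·)).map (addRightEmbedding 1)

def majGain (L : Finset ℕ) (p : ℕ) : ℕ :=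
  (if p ∈ L then 0 else p) + (L.filter (p < ·)).card

lemma mem_insertLigne {L : Finset ℕ} {p i : ℕ} :
    i ∈ insertLigne L p ↔ (i < p ∧ i ∈ L) ∨ (i = p ∧ p ≠ 0) ∨ (p + 2 ≤ i ∧ i - 1 ∈ L) := by
  simp only [insertLigne, Finset.mem_union, Finset.mem_filter, Finset.mem_sdiff,
    Finset.mem_singleton, Finset.mem_map, addRightEmbedding_apply]
  constructor
  · rintro ((⟨hL, hi⟩ | ⟨rfl, hi⟩) | ⟨j, ⟨hj, hpj⟩, rfl⟩)
    · exact Or.inl ⟨hi, hL⟩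
    · exact Or.inr (Or.inl ⟨rfl, hi⟩)
    · exact Or.inr (Or.inr ⟨by omega, by simpa using hj⟩)
  · rintro (⟨hi, hL⟩ | ⟨rfl, hi⟩ | ⟨hi, hL⟩)
    · exact Or.inl (Or.inl ⟨hL, hi⟩)
    · exact Or.inl (Or.inr ⟨rfl, hi⟩)
    · exact Or.inr ⟨i - 1, ⟨hL, by omega⟩, by omega⟩

lemma sum_insertLigne {L : Finset ℕ} (hL : 0 ∉ L) (p : ℕ) :
    ∑ i ∈ insertLigne L p, i = ∑ i ∈ L, i + majGain L p := by
  have hsplit : ∑ i ∈ L, i =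
      ∑ i ∈ L.filter (· < p), i + (if p ∈ L then p else 0) + ∑ i ∈ L.filter (p < ·), i := by
    rw [Finset.sum_filter, Finset.sum_filter, ← Finset.sum_ite_eq L p (fun i => i),
      ← Finset.sum_add_distrib, ← Finset.sum_add_distrib]
    exact Finset.sum_congr rfl fun i _ => by split_ifs <;> omega
  have hsingle : ∑ i ∈ ({p} \ {0} : Finset ℕ), i = p := by
    rcases Nat.eq_zero_or_pos p with rfl | hp
    · simp
    · rw [Finset.sdiff_singleton_eq_erase, Finset.erase_eq_of_notMem (by simpa using hp.ne),
        Finset.sum_singleton]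
  rw [insertLigne, Finset.sum_union, Finset.sum_union, Finset.sum_map, hsingle, hsplit, majGain]
  · simp only [addRightEmbedding_apply, Finset.sum_add_distrib, Finset.sum_const, smul_eq_mul,
      mul_one]
    split_ifs with hp
    · have : p ≠ 0 := fun h => hL (h ▸ hp)
      omega
    · omega
  · simp only [Finset.disjoint_left, Finset.mem_filter, Finset.mem_sdiff, Finset.mem_singleton]
    omega
  · simp only [Finset.disjoint_left, Finset.mem_union, Finset.mem_filter, Finset.mem_sdiff,
      Finset.mem_singleton, Finset.mem_map, addRightEmbedding_apply]
    omega

lemma majGain_injective (L : Finset ℕ) : Function.Injective (majGain L) := by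
  suffices ∀ {p q}, p < q → majGain L p ≠ majGain L q by
    intro p q hpq
    by_contra hne
    rcases Nat.lt_or_gt_of_ne hne with h | h
    · exact this h hpq
    · exact this h hpq.symm
  intro p q hpq
  have hsplit : (L.filter (p < ·)).card
      = (L.filter (q < ·)).card + (L.filter (fun j => p < j ∧ j ≤ q)).card := by
    rw [← Finset.card_union_of_disjoint (Finset.disjoint_filter.2 fun _ _ _ => by omega),
      Finset.filter_union_right]
    exact congrArg _ (Finset.filter_congr fun j _ => by omega)
  unfold majGain
  by_cases hq : q ∈ L
  · have : 0 < (L.filter (fun j => p < j ∧ j ≤ q)).card :=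
      Finset.card_pos.2 ⟨q, by simp [hq, hpq]⟩
    split_ifs <;> omega
  · have : (L.filter (fun j => p < j ∧ j ≤ q)).card ≤ q - p - 1 := by
      calc (L.filter (fun j => p < j ∧ j ≤ q)).card ≤ (Finset.Ioo p q).card := by
            refine Finset.card_le_card fun j hj => ?_
            simp only [Finset.mem_filter, Finset.mem_Ioo] at hj ⊢
            exact ⟨hj.2.1, lt_of_le_of_ne hj.2.2 fun h => hq (h ▸ hj.1)⟩
        _ = q - p - 1 := by simp
    split_ifs <;> omega

lemma majGain_le {n : ℕ} {L : Finset ℕ} (hL : L ⊆ Finset.Icc 1 (n - 1)) {p : ℕ} (hp : p ≤ n) :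
    majGain L p ≤ n := by
  have hgt : (L.filter (p < ·)).card ≤ n - 1 - p := by
    calc (L.filter (p < ·)).card ≤ (Finset.Ioc p (n - 1)).card := by
          refine Finset.card_le_card fun j hj => ?_
          simp only [Finset.mem_filter, Finset.mem_Ioc] at hj ⊢
          exact ⟨hj.2, (Finset.mem_Icc.1 (hL hj.1)).2⟩
      _ = n - 1 - p := Nat.card_Ioc _ _
  have hcard : (L.filter (p < ·)).card ≤ n - 1 := by
    calc (L.filter (p < ·)).card ≤ L.card := Finset.card_filter_le _ _
      _ ≤ (Finset.Icc 1 (n - 1)).card := Finset.card_le_card hL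
      _ = n - 1 := by simp
  unfold majGain
  split_ifs <;> omega

lemma exists_majGain_eq {n : ℕ} {L : Finset ℕ} (hL : L ⊆ Finset.Icc 1 (n - 1)) {k : ℕ}
    (hk : k ≤ n) : ∃ p ≤ n, majGain L p = k := by
  have hmaps : Set.MapsTo (majGain L) (Set.Iic n) (Set.Iic n) := fun p hp => majGain_le hL hp
  obtain ⟨p, hp, hpk⟩ :=
    ((Set.finite_Iic n).injOn_iff_bijOn_of_mapsTo hmaps).1 (majGain_injective L).injOn |>.surjOn
      (Set.mem_Iic.2 hk)
  exact ⟨p, hp, hpk⟩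

lemma getD_insertIdx {v : List ℕ} {p : ℕ} (hp : p ≤ v.length) (m i : ℕ) :
    (v.insertIdx p m).getD i 0 =
      if i < p then v.getD i 0 else if i = p then m else v.getD (i - 1) 0 := by
  simp only [List.getD_eq_getElem?_getD, List.getElem?_insertIdx]
  split_ifs <;> simp_all

lemma ligne_insertIdx_of_lt {v : List ℕ} {m p : ℕ} (hm : ∀ x ∈ v, m < x) (hp : p ≤ v.length) :
    ligne (v.insertIdx p m) = insertLigne (ligne v) p := by
  have hlow : ∀ j, j < v.length → m < v.getD j 0 := fun j hj => by
    rw [List.getD_eq_getElem _ _ hj]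
    exact hm _ (List.getElem_mem hj)
  ext i
  rw [mem_ligne, mem_insertLigne, mem_ligne, mem_ligne, List.length_insertIdx_of_le_length hp,
    getD_insertIdx hp, getD_insertIdx hp]
  have h1 := hlow (i - 1)
  have h2 := hlow (i - 1 - 1)
  split_ifs <;> omega

lemma filter_insertIdx_of_not {q : ℕ → Bool} {m : ℕ} (hm : q m = false) :
    ∀ (v : List ℕ) (p : ℕ), (v.insertIdx p m).filter q = v.filter q
  | v, 0 => by simp [hm]
  | [], _ + 1 => rfl
  | x :: v, p + 1 => by
    rw [List.insertIdx_succ_cons, List.filter_cons, List.filter_cons,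
      filter_insertIdx_of_not hm v p]

lemma map_add_one_range' (n : ℕ) : (List.range' 1 n).map (· + 1) = List.range' 2 n := by
  simpa only [Nat.add_comm 1] using List.map_add_range' (a := 1) 1 n 1

lemma IsPermWord.one_le {n : ℕ} {w : List ℕ} (hw : IsPermWord n w) {x : ℕ} (hx : x ∈ w) :
    1 ≤ x :=
  (List.mem_range'_1.1 (hw.mem_iff.1 hx)).1

/- For `u ∈ S_n`, `insertOne u p ∈ S_{n+1}` is `u` with its letters raised by one and `1` placed
at index `p`; read backwards, `u` is `σ^{(2)}` standardized when `σ = insertOne u p`. -/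
def insertOne (u : List ℕ) (p : ℕ) : List ℕ := (u.map (· + 1)).insertIdx p 1

lemma isPermWord_insertOne {n : ℕ} {u : List ℕ} (hu : IsPermWord n u) {p : ℕ} (hp : p ≤ n) :
    IsPermWord (n + 1) (insertOne u p) := by
  have hlen : p ≤ (u.map (· + 1)).length := by simp [hu.length_eq, hp]
  refine (List.perm_insertIdx 1 _ hlen).trans ?_
  rw [List.range'_succ, List.perm_cons, ← map_add_one_range']
  exact hu.map _

lemma IsPermWord.exists_eq_insertOne {n : ℕ} {w : List ℕ} (hw : IsPermWord (n + 1) w) :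
    ∃ u p, IsPermWord n u ∧ p ≤ n ∧ w = insertOne u p := by
  obtain ⟨p, hp, hwp⟩ :=
    List.getElem_of_mem (hw.mem_iff.2 (List.mem_range'_1.2 ⟨le_rfl, by omega⟩))
  set v := w.eraseIdx p
  have hwv : w = v.insertIdx p 1 := by rw [← hwp, List.insertIdx_eraseIdx_getElem]
  have hpv : p ≤ v.length := by simp [v, List.length_eraseIdx, hp]; omega
  have hv : v.Perm (List.range' 2 n) := by
    refine (List.perm_cons 1).1 ?_
    exact (List.perm_insertIdx 1 v hpv).symm.trans (hwv ▸ hw)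
  have hv2 : ∀ x ∈ v, 2 ≤ x := fun x hx => (List.mem_range'_1.1 (hv.mem_iff.1 hx)).1
  have hvlen : v.length = n := by simpa using hv.length_eq
  refine ⟨v.map (· - 1), p, ?_, by omega, ?_⟩
  · have h := hv.map (· - 1)
    rwa [List.map_sub_range' (by norm_num : 1 ≤ 2)] at h
  · rw [hwv, insertOne, List.map_map]
    congr
    conv_lhs => rw [← List.map_id v]
    exact List.map_congr_left fun x hx => by have := hv2 x hx; simp only [id, Function.comp]; omega

lemma filter_insertOne (u : List ℕ) (p j : ℕ) :
    (insertOne u p).filter (fun x => j + 2 ≤ x) = (u.filter (fun x => j + 1 ≤ x)).map (· + 1) := by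
  rw [insertOne, filter_insertIdx_of_not (by simp), List.filter_map]
  congr 1
  exact List.filter_congr fun x _ => by simp

lemma ligne_insertOne {n : ℕ} {u : List ℕ} (hu : IsPermWord n u) {p : ℕ} (hp : p ≤ n) :
    ligne (insertOne u p) = insertLigne (ligne u) p := by
  have hgt : ∀ y ∈ u.map (· + 1), 1 < y := by
    simp only [List.mem_map]
    rintro _ ⟨x, hx, rfl⟩
    have := hu.one_le hx
    omega
  rw [insertOne, ligne_insertIdx_of_lt hgt (by simp [hu.length_eq, hp]),
    ligne_map_of_strictMono (fun _ _ h => Nat.add_lt_add_right h 1)]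

lemma mc_insertOne {n : ℕ} {u : List ℕ} (hu : IsPermWord n u) {p : ℕ} (hp : p ≤ n) :
    mc (insertOne u p) = majGain (ligne u) p :: mc u := by
  have hlen : p ≤ (u.map (· + 1)).length := by simp [hu.length_eq, hp]
  have hsucc : StrictMono (· + 1 : ℕ → ℕ) := fun _ _ h => Nat.add_lt_add_right h 1
  have hself : (insertOne u p).filter (fun x => 0 + 1 ≤ x) = insertOne u p :=
    List.filter_eq_self.2 fun x hx => by
      simpa using (isPermWord_insertOne hu hp).one_le hx
  have hu1 : u.filter (fun x => 0 + 1 ≤ x) = u :=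
    List.filter_eq_self.2 fun x hx => by simpa using hu.one_le hx
  rw [mc, insertOne, List.length_insertIdx_of_le_length hlen, List.length_map, ← insertOne,
    List.range_succ_eq_map, List.map_cons, List.map_map, mc]
  congr 1
  · rw [hself, filter_insertOne, hu1, maj_map_of_strictMono hsucc,
      maj, maj, ligne_insertOne hu hp, sum_insertLigne (zero_notMem_ligne u)]
    omega
  · refine List.map_congr_left fun i _ => ?_
    show maj ((insertOne u p).filter (fun x => i + 2 ≤ x))
        - maj ((insertOne u p).filter (fun x => i + 1 + 2 ≤ x))
      = maj (u.filter (fun x => i + 1 ≤ x)) - maj (u.filter (fun x => i + 1 + 1 ≤ x))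
    rw [filter_insertOne, filter_insertOne, maj_map_of_strictMono hsucc,
      maj_map_of_strictMono hsucc]

lemma IsPermWord.eq_of_mc_eq {n : ℕ} {w w' : List ℕ} (hw : IsPermWord n w)
    (hw' : IsPermWord n w') (h : mc w = mc w') : w = w' := by
  induction n generalizing w w' with
  | zero =>
    rw [(hw.trans List.Perm.nil).eq_nil, (hw'.trans List.Perm.nil).eq_nil]
  | succ n ih =>
    obtain ⟨u, p, hu, hp, rfl⟩ := hw.exists_eq_insertOne
    obtain ⟨u', p', hu', hp', rfl⟩ := hw'.exists_eq_insertOne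
    rw [mc_insertOne hu hp, mc_insertOne hu' hp'] at h
    obtain ⟨hgain, hmc⟩ := List.cons.inj h
    obtain rfl := ih hu hu' hmc
    rw [majGain_injective _ hgain]

lemma Subdiagonal.of_cons {k : ℕ} {d : List ℕ} (h : Subdiagonal (k :: d)) : Subdiagonal d :=
  fun i hi => by
    have := h (i + 1) (by simpa using hi)
    simp only [List.getD_cons_succ, List.length_cons] at this
    omega

lemma Subdiagonal.head_le {k : ℕ} {d : List ℕ} (h : Subdiagonal (k :: d)) : k ≤ d.length := by
  simpa using h 0 (by simp)

lemma IsPermWord.ligne_subset {n : ℕ} {w : List ℕ} (hw : IsPermWord n w) :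
    ligne w ⊆ Finset.Icc 1 (n - 1) := by
  simpa [hw.length_eq] using ligne_subset_Icc w

lemma exists_mc_eq {d : List ℕ} (hd : Subdiagonal d) : ∃ w, IsPermWord d.length w ∧ mc w = d := by
  induction d with
  | nil => exact ⟨[], List.Perm.refl _, rfl⟩
  | cons k d ih =>
    obtain ⟨u, hu, rfl⟩ := ih hd.of_cons
    obtain ⟨p, hp, rfl⟩ := exists_majGain_eq hu.ligne_subset hd.head_le
    exact ⟨insertOne u p, isPermWord_insertOne hu hp, mc_insertOne hu hp⟩

lemma El_eq_ligne {d w : List ℕ} (hw : IsPermWord d.length w) (hmc : mc w = d) :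
    El d = ligne w := by
  have hex : ∃ w, IsPermWord d.length w ∧ mc w = d := ⟨w, hw, hmc⟩
  rw [El, dif_pos hex, hex.choose_spec.1.eq_of_mc_eq hw (hex.choose_spec.2.trans hmc.symm)]

lemma El_cons {k : ℕ} {d : List ℕ} (hd : Subdiagonal (k :: d)) :
    ∃ p, majGain (El d) p = k ∧ El (k :: d) = insertLigne (El d) p := by
  obtain ⟨u, hu, rfl⟩ := exists_mc_eq hd.of_cons
  obtain ⟨p, hp, rfl⟩ := exists_majGain_eq hu.ligne_subset hd.head_le
  have hw : IsPermWord (mc (insertOne u p)).length (insertOne u p) := by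
    rw [mc_insertOne hu hp, List.length_cons]
    exact isPermWord_insertOne hu hp
  refine ⟨p, by rw [El_eq_ligne hu rfl], ?_⟩
  rw [El_eq_ligne hu rfl, ← mc_insertOne hu hp, El_eq_ligne hw rfl, ligne_insertOne hu hp]

lemma El_cons_eq_of_El_eq {k : ℕ} {d₁ d₂ : List ℕ} (hd₁ : Subdiagonal (k :: d₁))
    (hd₂ : Subdiagonal (k :: d₂)) (h : El d₁ = El d₂) : El (k :: d₁) = El (k :: d₂) := by
  obtain ⟨p₁, hp₁, hEl₁⟩ := El_cons hd₁
  obtain ⟨p₂, hp₂, hEl₂⟩ := El_cons hd₂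
  rw [h] at hp₁ hEl₁
  rw [hEl₁, hEl₂, majGain_injective _ (hp₁.trans hp₂.symm)]

theorem stmt15_general (a b c : List ℕ)
    (hca : Subdiagonal (c ++ a)) (hcb : Subdiagonal (c ++ b))
    (h : El a = El b) : El (c ++ a) = El (c ++ b) := by
  induction c with
  | nil => exact h
  | cons k c ih => exact El_cons_eq_of_El_eq hca hcb (ih hca.of_cons hcb.of_cons)

theorem stmt15 (a b c : List ℕ)
    (ha : Subdiagonal a) (hb : Subdiagonal b)
    (hca : Subdiagonal (c ++ a)) (hcb : Subdiagonal (c ++ b))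
    (h : El a = El b) : El (c ++ a) = El (c ++ b) :=
  stmt15_general a b c hca hcb h
end
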